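/- arXiv:1812.11454 — 4 statements merged into one kernel-verified Lean document; each statement's English description precedes it below -/
import Mathlib

section
/- With weight ω(μ) = ε/(1+αμ)^4 on [-1,1], ε = 3(1-α²)³/(2(3+α²)), and α = -3u/(2+√(4-3u²)) where u = E_1/E_0 ∈ (-1,1), the first moment of the weight satisfies ∫_{-1}^1 μ ω(μ) dμ = E_1/E_0. -/
/-!
Since `x²(3 + a x) / (6 (1 + a x)³)` is an antiderivative of `x / (1 + a x)⁴` on the segment where
`1 + a x > 0`, the first moment of `ε / (1 + α μ)⁴` over `[-1, 1]` equals `-4 α / (3 + α²)`.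
The equation `-4 α / (3 + α²) = u` is the quadratic `u α² + 4 α + 3 u = 0`, and the given `α` is
its root in `(-1, 1)`.
-/

open MeasureTheory intervalIntegral

lemma hasDerivAt_sq_mul_div_one_add_mul_pow_three {a x : ℝ} (hx : 1 + a * x ≠ 0) :
    HasDerivAt (fun y => y ^ 2 * (3 + a * y) / (6 * (1 + a * y) ^ 3))
      (x / (1 + a * x) ^ 4) x := by
  have hlin : ∀ c : ℝ, HasDerivAt (fun y => c + a * y) a x := fun c => by
    simpa using ((hasDerivAt_id x).const_mul a).const_add c
  have hnum := (hasDerivAt_pow 2 x).fun_mul (hlin 3)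
  have hden := ((hlin 1).fun_pow 3).const_mul 6
  refine (hnum.fun_div hden (by positivity)).congr_deriv ?_
  rw [div_eq_div_iff (by positivity) (by positivity)]
  push_cast
  ring

lemma one_add_mul_pos_of_abs_lt_one {a x : ℝ} (ha : |a| < 1) (hx : |x| ≤ 1) : 0 < 1 + a * x := by
  have : |a * x| < 1 := by
    rw [abs_mul]
    exact lt_of_le_of_lt (mul_le_of_le_one_right (abs_nonneg a) hx) ha
  linarith [(abs_lt.1 this).1]

lemma integral_id_div_one_add_mul_pow_four {a : ℝ} (ha : |a| < 1) :
    ∫ x in (-1 : ℝ)..1, x / (1 + a * x) ^ 4 = -8 * a / (3 * (1 - a ^ 2) ^ 3) := by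
  have hpos : ∀ x ∈ Set.uIcc (-1 : ℝ) 1, 0 < 1 + a * x := by
    intro x hx
    rw [Set.uIcc_of_le (by norm_num)] at hx
    exact one_add_mul_pos_of_abs_lt_one ha (abs_le.2 hx)
  have hint : IntervalIntegrable (fun x : ℝ => x / (1 + a * x) ^ 4) volume (-1) 1 :=
    ContinuousOn.intervalIntegrable <|
      continuousOn_id.div (by fun_prop) fun x hx => (pow_pos (hpos x hx) 4).ne'
  rw [integral_eq_sub_of_hasDerivAt
    (fun x hx => hasDerivAt_sq_mul_div_one_add_mul_pow_three (hpos x hx).ne') hint]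
  have hright : 1 + a * 1 ≠ 0 := by linarith [(abs_lt.1 ha).1]
  have hleft : 1 + a * -1 ≠ 0 := by linarith [(abs_lt.1 ha).2]
  have hsq : 1 - a ^ 2 ≠ 0 := by nlinarith [abs_lt.1 ha]
  rw [div_sub_div _ _ (by positivity) (by positivity),
    div_eq_div_iff (by positivity) (by positivity)]
  ring

noncomputable def m1Weight (a x : ℝ) : ℝ :=
  3 * (1 - a ^ 2) ^ 3 / (2 * (3 + a ^ 2)) / (1 + a * x) ^ 4

lemma integral_mul_m1Weight {a : ℝ} (ha : |a| < 1) :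
    ∫ x in (-1 : ℝ)..1, x * m1Weight a x = -4 * a / (3 + a ^ 2) := by
  unfold m1Weight
  set c := 3 * (1 - a ^ 2) ^ 3 / (2 * (3 + a ^ 2)) with hc
  have hsplit : ∀ x : ℝ, x * (c / (1 + a * x) ^ 4) = c * (x / (1 + a * x) ^ 4) := fun x => by ring
  simp_rw [hsplit]
  rw [intervalIntegral.integral_const_mul, integral_id_div_one_add_mul_pow_four ha, hc]
  have : 1 - a ^ 2 ≠ 0 := by nlinarith [abs_lt.1 ha]
  field_simp
  ring

/-- The root `(-2 + √(4 - 3u²)) / u` of `u α² + 4 α + 3 u = 0`, rationalized so that it is also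
correct at `u = 0`. -/
noncomputable def m1Alpha (u : ℝ) : ℝ := -(3 * u) / (2 + Real.sqrt (4 - 3 * u ^ 2))

lemma abs_m1Alpha_lt_one {u : ℝ} (hu : |u| < 1) : |m1Alpha u| < 1 := by
  have hu2 : u ^ 2 < 1 := by simpa using sq_lt_one_iff_abs_lt_one u |>.2 hu
  have hs : 1 ≤ Real.sqrt (4 - 3 * u ^ 2) := Real.one_le_sqrt.2 (by linarith)
  rw [m1Alpha, abs_div, abs_neg, abs_mul, abs_of_pos (by positivity : (0 : ℝ) < 2 + _),
    div_lt_one (by positivity)]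
  norm_num
  linarith

lemma m1Alpha_moment {u : ℝ} (hu : |u| < 1) :
    -4 * m1Alpha u / (3 + m1Alpha u ^ 2) = u := by
  have hu2 : u ^ 2 < 1 := by simpa using sq_lt_one_iff_abs_lt_one u |>.2 hu
  have hs := Real.sq_sqrt (by linarith : (0 : ℝ) ≤ 4 - 3 * u ^ 2)
  have : 0 ≤ Real.sqrt (4 - 3 * u ^ 2) := Real.sqrt_nonneg _
  rw [m1Alpha, div_eq_iff (by positivity)]
  field_simp
  linear_combination (-u) * hs

theorem weight_first_moment_general (E0 E1 : ℝ) (hu : |E1 / E0| < 1) :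
    (let u := E1 / E0
     let α := -(3 * u) / (2 + Real.sqrt (4 - 3 * u ^ 2))
     let ε := 3 * (1 - α ^ 2) ^ 3 / (2 * (3 + α ^ 2))
     ∫ μ in (-1 : ℝ)..1, μ * (ε / (1 + α * μ) ^ 4)) = E1 / E0 :=
  (integral_mul_m1Weight (abs_m1Alpha_lt_one hu)).trans (m1Alpha_moment hu)

/-- The M₁ weight `ω(μ) = ε/(1+αμ)^4`, with `α = -3u/(2+√(4-3u²))` and
`ε = 3(1-α²)³/(2(3+α²))`, reproduces the first normalized moment:
`∫_{-1}^1 μ ω(μ) dμ = u = E₁/E₀`. -/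
theorem weight_first_moment (E0 E1 : ℝ) (hE0 : 0 < E0) (hu : |E1 / E0| < 1) :
    (let u := E1 / E0
     let α := -(3 * u) / (2 + Real.sqrt (4 - 3 * u ^ 2))
     let ε := 3 * (1 - α ^ 2) ^ 3 / (2 * (3 + α ^ 2))
     ∫ μ in (-1 : ℝ)..1, μ * (ε / (1 + α * μ) ^ 4)) = E1 / E0 :=
  weight_first_moment_general E0 E1 hu
end

section
/- For the M₁ model, if E_0 > 0 and |E_1/E_0| < 1, then the closed second moment E_2 = E_0 (3 + 4(E_1/E_0)²)/(5 + 2√(4 - 3(E_1/E_0)²)) satisfies E_1² < E_0 E_2 and E_2 < E_0, i.e., the M₁ closure is realizable. -/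
/-!
Writing `s = √(4 - 3u²)`, so that `3 + 4u² = (25 - 4s²)/3`, the Eddington factor
`χ(u) = (3 + 4u²)/(5 + 2s)` collapses to `(5 - 2s)/3`. Then `χ < 1` is `1 < s`, and
`u² < χ` is `3u² = 4 - s² < 5 - 2s`, i.e. `0 < (s - 1)²`; both hold because `|u| < 1`
forces `1 < s`. Multiplying by `E₀ > 0` gives the two realizability inequalities.
-/

open Real

noncomputable section

/-- The Eddington factor `E₂/E₀` of the M₁ closure as a function of `u = E₁/E₀`. -/
def eddingtonFactor (u : ℝ) : ℝ :=
  (3 + 4 * u ^ 2) / (5 + 2 * √(4 - 3 * u ^ 2))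

theorem eddingtonFactor_eq {u : ℝ} (hu : 3 * u ^ 2 ≤ 4) :
    eddingtonFactor u = (5 - 2 * √(4 - 3 * u ^ 2)) / 3 := by
  have hs : √(4 - 3 * u ^ 2) ^ 2 = 4 - 3 * u ^ 2 := sq_sqrt (by linarith)
  have hden : 0 < 5 + 2 * √(4 - 3 * u ^ 2) := by positivity
  rw [eddingtonFactor, div_eq_div_iff hden.ne' three_ne_zero]
  linear_combination 4 * hs

theorem one_lt_sqrt_four_sub_three_mul_sq {u : ℝ} (hu : u ^ 2 < 1) :
    1 < √(4 - 3 * u ^ 2) :=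
  (lt_sqrt zero_le_one).2 (by linarith)

theorem eddingtonFactor_lt_one {u : ℝ} (hu : u ^ 2 < 1) : eddingtonFactor u < 1 := by
  rw [eddingtonFactor_eq (by linarith)]
  linarith [one_lt_sqrt_four_sub_three_mul_sq hu]

theorem sq_lt_eddingtonFactor {u : ℝ} (hu : u ^ 2 < 1) : u ^ 2 < eddingtonFactor u := by
  have hs : √(4 - 3 * u ^ 2) ^ 2 = 4 - 3 * u ^ 2 := sq_sqrt (by linarith)
  have hs1 := one_lt_sqrt_four_sub_three_mul_sq hu
  rw [eddingtonFactor_eq (by linarith)]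
  nlinarith [mul_pos (sub_pos.2 hs1) (sub_pos.2 hs1)]

end

/-- Realizability of the M₁ closure: for `E₀ > 0` and `|E₁/E₀| < 1`, the closed
moment `E₂ = E₀(3+4u²)/(5+2√(4-3u²))` with `u = E₁/E₀` satisfies
`E₁² < E₀E₂` and `E₂ < E₀`. -/
theorem M1_closure_realizable (E0 E1 : ℝ) (hE0 : 0 < E0) (hu : |E1 / E0| < 1) :
    (E1) ^ 2 < E0 * (E0 * (3 + 4 * (E1 / E0) ^ 2) / (5 + 2 * Real.sqrt (4 - 3 * (E1 / E0) ^ 2))) ∧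
    E0 * (3 + 4 * (E1 / E0) ^ 2) / (5 + 2 * Real.sqrt (4 - 3 * (E1 / E0) ^ 2)) < E0 := by
  have hu2 : (E1 / E0) ^ 2 < 1 := sq_lt_one_iff_abs_lt_one _ |>.2 hu
  have hE1 : E1 ^ 2 = E0 * (E0 * (E1 / E0) ^ 2) := by field_simp
  rw [mul_div_assoc, ← eddingtonFactor, hE1]
  refine ⟨?_, ?_⟩
  · exact mul_lt_mul_of_pos_left (mul_lt_mul_of_pos_left (sq_lt_eddingtonFactor hu2) hE0) hE0
  · simpa using mul_lt_mul_of_pos_left (eddingtonFactor_lt_one hu2) hE0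
end

section
/- Let ω be a positive normalized weight on [-1,1] and Î_* = ω·Σ_{m=0}^N f_m φ_m(μ) the unique weighted polynomial expansion matching moments E_0,…,E_N (with φ_m the monic orthogonal polynomials for ω). Then Î_* minimizes the functional J(I) = ∫_{-1}^1 I(μ)²/ω(μ) dμ among all functions I ∈ L²(ω⁻¹dμ) satisfying ∫_{-1}^1 μ^k I(μ) dμ = E_k for k = 0,…,N. -/
open MeasureTheory intervalIntegral

/-!
Write `Î_* = ω P` with `P = Σ f_m φ_m`, a polynomial of degree at most `N`. For fixed `ω > 0`,
`I ↦ I² / ω` is convex, and its tangent at `ω P` gives `I² / ω ≥ 2 P I - P · ω P`. Integrating,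
`J(I) ≥ 2 ∫ P I - ∫ P Î_*`, and `∫ P I = ∫ P Î_*` since `P` is a combination of the matched
moments `μ^k`, `k ≤ N`. The right-hand side is therefore `∫ P Î_* = J(Î_*)`.
-/

namespace Polynomial

variable {ν : Measure ℝ} {a b : ℝ} {g h : ℝ → ℝ}

lemma eval_mul_eq_sum_coeff_mul_pow_mul (p : ℝ[X]) (g : ℝ → ℝ) (x : ℝ) :
    p.eval x * g x = ∑ k ∈ Finset.range (p.natDegree + 1), p.coeff k * (x ^ k * g x) := by
  rw [eval_eq_sum_range, Finset.sum_mul]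
  exact Finset.sum_congr rfl fun k _ => by ring

lemma intervalIntegrable_eval_mul (p : ℝ[X])
    (hg : ∀ k, IntervalIntegrable (fun x => x ^ k * g x) ν a b) :
    IntervalIntegrable (fun x => p.eval x * g x) ν a b := by
  simp only [eval_mul_eq_sum_coeff_mul_pow_mul p g]
  simpa only [Finset.sum_fn] using
    IntervalIntegrable.sum (Finset.range _) fun k _ => (hg k).const_mul (p.coeff k)

lemma intervalIntegrable_pow_mul_eval_mul (p : ℝ[X])
    (hg : ∀ k, IntervalIntegrable (fun x => x ^ k * g x) ν a b) (k : ℕ) :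
    IntervalIntegrable (fun x => x ^ k * (p.eval x * g x)) ν a b := by
  have := intervalIntegrable_eval_mul (X ^ k * p) hg
  simpa only [eval_mul, eval_pow, eval_X, mul_assoc] using this

lemma integral_eval_mul (p : ℝ[X])
    (hg : ∀ k, IntervalIntegrable (fun x => x ^ k * g x) ν a b) :
    ∫ x in a..b, p.eval x * g x ∂ν
      = ∑ k ∈ Finset.range (p.natDegree + 1), p.coeff k * ∫ x in a..b, x ^ k * g x ∂ν := by
  simp only [eval_mul_eq_sum_coeff_mul_pow_mul p g]
  rw [integral_finsetSum fun k _ => (hg k).const_mul _]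
  simp only [intervalIntegral.integral_const_mul]

lemma integral_eval_mul_eq_of_moments_eq {n : ℕ} (p : ℝ[X]) (hp : p.natDegree ≤ n)
    (hg : ∀ k, IntervalIntegrable (fun x => x ^ k * g x) ν a b)
    (hh : ∀ k, IntervalIntegrable (fun x => x ^ k * h x) ν a b)
    (hgh : ∀ k ≤ n, ∫ x in a..b, x ^ k * g x ∂ν = ∫ x in a..b, x ^ k * h x ∂ν) :
    ∫ x in a..b, p.eval x * g x ∂ν = ∫ x in a..b, p.eval x * h x ∂ν := by
  rw [integral_eval_mul p hg, integral_eval_mul p hh]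
  refine Finset.sum_congr rfl fun k hk => ?_
  rw [hgh k (by have := Finset.mem_range.mp hk; omega)]

end Polynomial

/-- The tangent-line bound for the convex function `i ↦ i² / w` at `i = w p`. -/
lemma two_mul_mul_sub_mul_mul_le_sq_div {w : ℝ} (hw : 0 < w) (p i : ℝ) :
    2 * (p * i) - p * (w * p) ≤ i ^ 2 / w := by
  rw [le_div_iff₀ hw]
  nlinarith [sq_nonneg (i - w * p)]

open Polynomial in
lemma integral_mul_eval_sq_div_le_of_moments_eq {ν : Measure ℝ} {a b : ℝ} (hab : a ≤ b)
    {n : ℕ} {w I : ℝ → ℝ} (hw : ∀ x ∈ Set.Icc a b, 0 < w x)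
    (hw_mom : ∀ k, IntervalIntegrable (fun x => x ^ k * w x) ν a b)
    (P : ℝ[X]) (hP : P.natDegree ≤ n)
    (hI2 : IntervalIntegrable (fun x => I x ^ 2 / w x) ν a b)
    (hI_mom : ∀ k, IntervalIntegrable (fun x => x ^ k * I x) ν a b)
    (hmom : ∀ k ≤ n, ∫ x in a..b, x ^ k * I x ∂ν = ∫ x in a..b, x ^ k * (w x * P.eval x) ∂ν) :
    ∫ x in a..b, (w x * P.eval x) ^ 2 / w x ∂ν ≤ ∫ x in a..b, I x ^ 2 / w x ∂ν := by
  have hIhat_mom : ∀ k, IntervalIntegrable (fun x => x ^ k * (w x * P.eval x)) ν a b := by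
    simpa only [mul_comm (w _)] using intervalIntegrable_pow_mul_eval_mul P hw_mom
  have hPI := intervalIntegrable_eval_mul P hI_mom
  have hPIhat := intervalIntegrable_eval_mul P hIhat_mom
  have hJ_Ihat : ∫ x in a..b, (w x * P.eval x) ^ 2 / w x ∂ν
      = ∫ x in a..b, P.eval x * (w x * P.eval x) ∂ν := by
    refine integral_congr fun x hx => ?_
    have := (hw x (Set.uIcc_of_le hab ▸ hx)).ne'
    field_simp
  have hcross := integral_eval_mul_eq_of_moments_eq P hP hI_mom hIhat_mom hmom
  have htangent : ∫ x in a..b, 2 * (P.eval x * I x) - P.eval x * (w x * P.eval x) ∂ν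
      ≤ ∫ x in a..b, I x ^ 2 / w x ∂ν :=
    integral_mono_on hab ((hPI.const_mul 2).sub hPIhat) hI2
      fun x hx => two_mul_mul_sub_mul_mul_le_sq_div (hw x hx) _ _
  rw [integral_sub (hPI.const_mul 2) hPIhat, intervalIntegral.integral_const_mul, hcross]
    at htangent
  linarith

theorem weighted_expansion_minimizes_quadratic_entropy_general (N : ℕ) (ω : ℝ → ℝ)
    (hω : ∀ μ ∈ Set.Icc (-1 : ℝ) 1, 0 < ω μ)
    (hint : ∀ k : ℕ, IntervalIntegrable (fun μ => μ ^ k * ω μ) volume (-1) 1)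
    (φ : ℕ → Polynomial ℝ)
    (hdeg : ∀ m ≤ N, (φ m).natDegree = m)
    (f : Fin (N + 1) → ℝ) (E : Fin (N + 1) → ℝ)
    (Ihat : ℝ → ℝ)
    (hIhat : ∀ μ, Ihat μ = ω μ * ∑ m : Fin (N + 1), f m * (φ (m : ℕ)).eval μ)
    (hmatch : ∀ k : Fin (N + 1), ∫ μ in (-1 : ℝ)..1, μ ^ (k : ℕ) * Ihat μ = E k)
    (I : ℝ → ℝ)
    (hI2 : IntervalIntegrable (fun μ => (I μ) ^ 2 / ω μ) volume (-1) 1)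
    (hIk : ∀ k : ℕ, IntervalIntegrable (fun μ => μ ^ k * I μ) volume (-1) 1)
    (hconstr : ∀ k : Fin (N + 1), ∫ μ in (-1 : ℝ)..1, μ ^ (k : ℕ) * I μ = E k) :
    ∫ μ in (-1 : ℝ)..1, (Ihat μ) ^ 2 / ω μ ≤ ∫ μ in (-1 : ℝ)..1, (I μ) ^ 2 / ω μ := by
  set P : Polynomial ℝ := ∑ m : Fin (N + 1), Polynomial.C (f m) * φ m
  have hIhatP : Ihat = fun μ => ω μ * P.eval μ := by
    funext μ
    simp [hIhat, P, Polynomial.eval_finsetSum]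
  have hPdeg : P.natDegree ≤ N := by
    refine Polynomial.natDegree_sum_le_of_forall_le _ _ fun m _ => ?_
    exact (Polynomial.natDegree_C_mul_le _ _).trans ((hdeg m m.is_le).trans_le m.is_le)
  have hmom : ∀ k ≤ N, ∫ μ in (-1 : ℝ)..1, μ ^ k * I μ = ∫ μ in (-1 : ℝ)..1, μ ^ k * Ihat μ :=
    fun k hk => (hconstr ⟨k, Nat.lt_succ_of_le hk⟩).trans (hmatch ⟨k, Nat.lt_succ_of_le hk⟩).symm
  rw [hIhatP] at hmom ⊢
  exact integral_mul_eval_sq_div_le_of_moments_eq (by norm_num) hω hint P hPdeg hI2 hIk hmom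

/-- Variational characterization of the weighted expansion ansatz:
`Î_* = ω Σ f_m φ_m`, matching the moments `E₀,…,E_N`, minimizes
`J(I) = ∫_{-1}^1 I(μ)²/ω(μ) dμ` among all moment-matching functions. -/
theorem weighted_expansion_minimizes_quadratic_entropy (N : ℕ) (ω : ℝ → ℝ)
    (hω : ∀ μ ∈ Set.Icc (-1 : ℝ) 1, 0 < ω μ)
    (hnorm : ∫ μ in (-1 : ℝ)..1, ω μ = 1)
    (hint : ∀ k : ℕ, IntervalIntegrable (fun μ => μ ^ k * ω μ) volume (-1) 1)
    (φ : ℕ → Polynomial ℝ)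
    (hmonic : ∀ m ≤ N, (φ m).Monic)
    (hdeg : ∀ m ≤ N, (φ m).natDegree = m)
    (horth : ∀ m ≤ N, ∀ n ≤ N, m ≠ n →
      ∫ μ in (-1 : ℝ)..1, (φ m).eval μ * (φ n).eval μ * ω μ = 0)
    (f : Fin (N + 1) → ℝ) (E : Fin (N + 1) → ℝ)
    (Ihat : ℝ → ℝ)
    (hIhat : ∀ μ, Ihat μ = ω μ * ∑ m : Fin (N + 1), f m * (φ (m : ℕ)).eval μ)
    (hmatch : ∀ k : Fin (N + 1), ∫ μ in (-1 : ℝ)..1, μ ^ (k : ℕ) * Ihat μ = E k)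
    (I : ℝ → ℝ)
    (hI2 : IntervalIntegrable (fun μ => (I μ) ^ 2 / ω μ) volume (-1) 1)
    (hIk : ∀ k : ℕ, IntervalIntegrable (fun μ => μ ^ k * I μ) volume (-1) 1)
    (hconstr : ∀ k : Fin (N + 1), ∫ μ in (-1 : ℝ)..1, μ ^ (k : ℕ) * I μ = E k) :
    ∫ μ in (-1 : ℝ)..1, (Ihat μ) ^ 2 / ω μ ≤ ∫ μ in (-1 : ℝ)..1, (I μ) ^ 2 / ω μ :=
  weighted_expansion_minimizes_quadratic_entropy_general N ω hω hint φ hdeg f E Ihat hIhat hmatch I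
    hI2 hIk hconstr
end

section
/- Suppose two states U^L, U^R with E_0^L, E_0^R > 0 satisfy the Rankine–Hugoniot conditions E_1^R − E_1^L = s(E_0^R − E_0^L), E_2^R − E_2^L = s(E_1^R − E_1^L) with E_0^R ≠ E_0^L and s > E_1^R/E_0^R. Then with u = E_1/E_0 and p = E_2 − E_1²/E_0: (E_0^R − E_0^L)(u^R − u^L) > 0 and (E_0^R − E_0^L)(p^R − p^L) ≥ 0, with the latter strict unless E_0^R E_1^L = E_0^L E_1^R. -/
/-! Both products are rational functions of the two states that the Rankine–Hugoniot conditions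
turn into manifestly signed expressions: the velocity jump becomes `(ΔE₀)²/E₀ᴸ · (s - uᴿ)`, and
the pressure jump becomes the perfect square `(E₀ᴿE₁ᴸ - E₀ᴸE₁ᴿ)²/(E₀ᴸE₀ᴿ)`. -/

section RankineHugoniot

variable {K : Type*} [Field K] {E0L E0R E1L E1R E2L E2R s : K}

theorem rankineHugoniot_mul_velocity_jump (h0L : E0L ≠ 0) (h0R : E0R ≠ 0)
    (hRH1 : E1R - E1L = s * (E0R - E0L)) :
    (E0R - E0L) * (E1R / E0R - E1L / E0L) = (E0R - E0L) ^ 2 / E0L * (s - E1R / E0R) := by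
  field_simp
  linear_combination (E0R * (E0R - E0L)) * hRH1

theorem rankineHugoniot_mul_pressure_jump (h0L : E0L ≠ 0) (h0R : E0R ≠ 0)
    (hRH1 : E1R - E1L = s * (E0R - E0L)) (hRH2 : E2R - E2L = s * (E1R - E1L)) :
    (E0R - E0L) * ((E2R - E1R ^ 2 / E0R) - (E2L - E1L ^ 2 / E0L)) =
      (E0R * E1L - E0L * E1R) ^ 2 / (E0L * E0R) := by
  field_simp
  linear_combination (E0L * E0R * (E0R - E0L)) * hRH2 - (E0L * E0R * (E1R - E1L)) * hRH1

end RankineHugoniot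

/-- Shock relations for the MP₂ system: if two states satisfy the
Rankine–Hugoniot conditions with shock speed `s > E₁ᴿ/E₀ᴿ` and `E₀ᴿ ≠ E₀ᴸ`,
then with `u = E₁/E₀` and `p = E₂ - E₁²/E₀` one has
`(E₀ᴿ - E₀ᴸ)(uᴿ - uᴸ) > 0` and `(E₀ᴿ - E₀ᴸ)(pᴿ - pᴸ) ≥ 0`, the latter being
strict unless `E₀ᴿE₁ᴸ = E₀ᴸE₁ᴿ`. -/
theorem MP2_shock_relations (E0L E0R E1L E1R E2L E2R s : ℝ)
    (h0L : 0 < E0L) (h0R : 0 < E0R)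
    (hRH1 : E1R - E1L = s * (E0R - E0L))
    (hRH2 : E2R - E2L = s * (E1R - E1L))
    (hne : E0R ≠ E0L) (hs : E1R / E0R < s) :
    0 < (E0R - E0L) * (E1R / E0R - E1L / E0L) ∧
    0 ≤ (E0R - E0L) * ((E2R - E1R ^ 2 / E0R) - (E2L - E1L ^ 2 / E0L)) ∧
    (E0R * E1L ≠ E0L * E1R →
      0 < (E0R - E0L) * ((E2R - E1R ^ 2 / E0R) - (E2L - E1L ^ 2 / E0L))) := by
  rw [rankineHugoniot_mul_pressure_jump h0L.ne' h0R.ne' hRH1 hRH2,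
    rankineHugoniot_mul_velocity_jump h0L.ne' h0R.ne' hRH1]
  have hjump : E0R - E0L ≠ 0 := sub_ne_zero.mpr hne
  have hspeed : 0 < s - E1R / E0R := sub_pos.mpr hs
  refine ⟨by positivity, by positivity, fun hflux => ?_⟩
  have : E0R * E1L - E0L * E1R ≠ 0 := sub_ne_zero.mpr hflux
  positivity
end
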